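/- arXiv:2307.00029 — 4 statements merged into one kernel-verified Lean document; each statement's English description precedes it below -/
import Mathlib

section
/- For every n ≥ 0, the sum of the weight characters ω(τ) over all rooted planar binary trees τ with exactly n internal vertices equals n!. -/
/-- Rooted planar binary trees. -/
inductive PBTree : Type
  | leaf : PBTree
  | graft : PBTree → PBTree → PBTree
  deriving DecidableEq

namespace PBTree

/-- The grade of a tree: its number of internal vertices. -/
def grade : PBTree → ℕ
  | leaf => 0
  | graft t1 t2 => grade t1 + grade t2 + 1

/-- The weight character ω. -/
def weight : PBTree → ℕ
  | leaf => 1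
  | graft t1 t2 => Nat.choose (grade t1 + grade t2) (grade t1) * weight t1 * weight t2

end PBTree

/-- The finset of trees of grade n. -/
def trees : ℕ → Finset PBTree
  | 0 => {PBTree.leaf}
  | (n+1) => (Finset.range (n+1)).attach.biUnion fun i =>
      (trees i.1 ×ˢ trees (n - i.1)).image fun p => PBTree.graft p.1 p.2
  decreasing_by
  · have := Finset.mem_range.mp i.2; omega
  · have := Finset.mem_range.mp i.2; omega

lemma mem_trees : ∀ n τ, τ ∈ trees n ↔ PBTree.grade τ = n := by
  intro n
  induction n using Nat.strong_induction_on with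
  | _ n ih =>
    intro τ
    match n, τ with
    | 0, PBTree.leaf => simp [trees, PBTree.grade]
    | 0, PBTree.graft a b => simp [trees, PBTree.grade]
    | (n+1), PBTree.leaf =>
      simp [trees, PBTree.grade]
    | (n+1), PBTree.graft a b =>
      simp only [trees, Finset.mem_biUnion, Finset.mem_attach, Finset.mem_image,
        Finset.mem_product, Prod.exists, true_and]
      constructor
      · rintro ⟨⟨i, hi⟩, x, y, ⟨hx, hy⟩, heq⟩
        injection heq with h1 h2
        subst h1; subst h2
        have hi' := Finset.mem_range.mp hi
        have hx' := (ih i (by omega) x).mp hx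
        have hy' := (ih (n - i) (by omega) y).mp hy
        simp only [PBTree.grade]; omega
      · intro h
        simp only [PBTree.grade] at h
        exact ⟨⟨PBTree.grade a, Finset.mem_range.mpr (by omega)⟩, a, b,
          ⟨(ih (PBTree.grade a) (by omega) a).mpr rfl,
           (ih (n - PBTree.grade a) (by omega) b).mpr (by omega)⟩, rfl⟩

lemma sum_trees : ∀ n, ∑ τ ∈ trees n, PBTree.weight τ = Nat.factorial n := by
  intro n
  induction n using Nat.strong_induction_on with
  | _ n ih =>
    match n with
    | 0 => simp [trees, PBTree.weight]
    | (n+1) =>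
      rw [trees]
      rw [Finset.sum_biUnion]
      · have key : ∀ i : {x // x ∈ Finset.range (n+1)},
            ∑ τ ∈ (trees i.1 ×ˢ trees (n - i.1)).image (fun p => PBTree.graft p.1 p.2),
              PBTree.weight τ = Nat.factorial n := by
          rintro ⟨i, hi⟩
          have hi' := Finset.mem_range.mp hi
          rw [Finset.sum_image (by rintro ⟨a,b⟩ _ ⟨c,d⟩ _ h; cases h; rfl)]
          rw [Finset.sum_product]
          have : ∀ a ∈ trees i, ∀ b ∈ trees (n - i),
              PBTree.weight (PBTree.graft a b) = Nat.choose n i * PBTree.weight a * PBTree.weight b := by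
            intro a ha b hb
            have ha' := (mem_trees _ _).mp ha
            have hb' := (mem_trees _ _).mp hb
            have hin : i + (n - i) = n := by omega
            simp [PBTree.weight, ha', hb', hin]
          calc ∑ a ∈ trees i, ∑ b ∈ trees (n - i), PBTree.weight (PBTree.graft a b)
              = ∑ a ∈ trees i, ∑ b ∈ trees (n - i),
                  Nat.choose n i * PBTree.weight a * PBTree.weight b := by
                  apply Finset.sum_congr rfl; intro a ha
                  exact Finset.sum_congr rfl fun b hb => this a ha b hb
            _ = Nat.choose n i * ((∑ a ∈ trees i, PBTree.weight a) * ∑ b ∈ trees (n-i), PBTree.weight b) := by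
                  rw [Finset.sum_mul_sum, Finset.mul_sum]
                  refine Finset.sum_congr rfl fun a _ => ?_
                  rw [Finset.mul_sum]
                  exact Finset.sum_congr rfl fun b _ => by ring
            _ = Nat.choose n i * (Nat.factorial i * Nat.factorial (n - i)) := by
                  rw [ih i (by omega), ih (n - i) (by omega)]
            _ = Nat.factorial n := by
                  rw [← mul_assoc, Nat.choose_mul_factorial_mul_factorial (by omega)]
        rw [Finset.sum_congr rfl fun i _ => key i]
        simp [Nat.factorial_succ, mul_comm]
      · -- pairwise disjoint
        rintro ⟨i, hi⟩ _ ⟨j, hj⟩ _ hij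
        simp only [Function.onFun]
        rw [Finset.disjoint_left]
        rintro τ hτi hτj
        simp only [Finset.mem_image, Finset.mem_product, Prod.exists] at hτi hτj
        obtain ⟨a, b, ⟨ha, hb⟩, rfl⟩ := hτi
        obtain ⟨c, d, ⟨hc, hd⟩, heq⟩ := hτj
        cases heq
        have := (mem_trees _ _).mp ha
        have := (mem_trees _ _).mp hc
        exact hij (by simp; omega)

/-- For every `n ≥ 0`, the sum of the weight characters `ω(τ)` over all rooted planar
binary trees `τ` with exactly `n` internal vertices equals `n!`. -/
theorem sum_weight_trees_of_grade (n : ℕ) :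
    ∑ᶠ τ ∈ {τ : PBTree | PBTree.grade τ = n}, PBTree.weight τ = Nat.factorial n := by
  have hset : {τ : PBTree | PBTree.grade τ = n} = ↑(trees n) := by
    ext τ; simp [mem_trees]
  rw [hset, finsum_mem_coe_finset]
  exact sum_trees n
end

section
/- Branching power formula: for all n ≥ 0, B_∨^n(leaf) = Σ_{|τ|=n} ω(τ)·τ, where B_∨ is the linear branching operator on the free vector space of rooted planar binary trees that sends a tree τ to the sum of all trees obtained by attaching a single internal vertex (a cherry ∨) at one of the free leaves of τ. -/
namespace PBTree

/-- The branching operator on a single tree: attach a cherry `∨` successively and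
additively at each free leaf.  Values in the free ℚ-vector space `PBTree →₀ ℚ`. -/
noncomputable def Bv : PBTree → (PBTree →₀ ℚ)
  | leaf => Finsupp.single (graft leaf leaf) 1
  | graft t1 t2 =>
      (Bv t1).sum (fun σ a => Finsupp.single (graft σ t2) a)
        + (Bv t2).sum (fun σ a => Finsupp.single (graft t1 σ) a)

/-- The linear extension of the branching operator `B_∨` to the free vector space. -/
noncomputable def BvLin (f : PBTree →₀ ℚ) : PBTree →₀ ℚ :=
  f.sum fun τ a => a • Bv τ

/-- The bilinear extension of grafting to the free vector space. -/
noncomputable def graftLin (f g : PBTree →₀ ℚ) : PBTree →₀ ℚ :=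
  f.sum fun τ1 a => g.sum fun τ2 b => Finsupp.single (graft τ1 τ2) (a * b)

/-- The grading operator `G`, sending a tree `τ` of positive grade to `(1/|τ|)·τ`,
extended linearly. -/
noncomputable def Gop (f : PBTree →₀ ℚ) : PBTree →₀ ℚ :=
  f.sum fun τ a => Finsupp.single τ ((grade τ : ℚ)⁻¹ * a)

end PBTree

/-! `B_∨` is a derivation for grafting: `B_∨(τ₁ ∨ τ₂) = B_∨ τ₁ ∨ τ₂ + τ₁ ∨ B_∨ τ₂`. Since
`B_∨(leaf) = leaf ∨ leaf`, the general Leibniz rule gives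
`B_∨^(m+1)(leaf) = Σ_{i+j=m} C(m,i) · B_∨^i(leaf) ∨ B_∨^j(leaf)`. Reading off the coefficient of
`τ₁ ∨ τ₂`, by induction on the tree, reproduces the recursion defining `ω`. -/

open Finset

theorem Module.End.iterate_apply_of_leibniz {R M N P : Type*} [CommSemiring R]
    [AddCommMonoid M] [AddCommMonoid N] [AddCommMonoid P] [Module R M] [Module R N] [Module R P]
    (μ : M →ₗ[R] N →ₗ[R] P) (D₁ : Module.End R M) (D₂ : Module.End R N) (D : Module.End R P)
    (hD : ∀ x y, D (μ x y) = μ (D₁ x) y + μ x (D₂ y)) (n : ℕ) (x : M) (y : N) :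
    D^[n] (μ x y) = ∑ ij ∈ antidiagonal n, n.choose ij.1 • μ (D₁^[ij.1] x) (D₂^[ij.2] y) := by
  induction n with
  | zero => simp
  | succ n ih =>
    rw [sum_antidiagonal_choose_succ_nsmul (fun i j => μ (D₁^[i] x) (D₂^[j] y)) n]
    simp only [Function.iterate_succ_apply', ih, map_sum, map_nsmul, hD, smul_add,
      sum_add_distrib, add_comm]
    congr 1
    refine sum_congr rfl fun ⟨i, j⟩ hij => ?_
    rw [n.choose_symm_of_eq_add (mem_antidiagonal.1 hij).symm]

namespace PBTree

noncomputable def graftₗ : (PBTree →₀ ℚ) →ₗ[ℚ] (PBTree →₀ ℚ) →ₗ[ℚ] (PBTree →₀ ℚ) :=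
  Finsupp.linearCombination ℚ fun τ => Finsupp.lmapDomain ℚ ℚ (graft τ)

noncomputable def branchingₗ : Module.End ℚ (PBTree →₀ ℚ) :=
  Finsupp.linearCombination ℚ Bv

theorem coe_branchingₗ : ⇑branchingₗ = BvLin :=
  funext fun f => Finsupp.linearCombination_apply ℚ f

theorem graftₗ_single_left (τ : PBTree) (a : ℚ) (g : PBTree →₀ ℚ) :
    graftₗ (Finsupp.single τ a) g = a • Finsupp.mapDomain (graft τ) g := by
  simp [graftₗ]

theorem graftₗ_single_right (f : PBTree →₀ ℚ) (τ : PBTree) (b : ℚ) :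
    graftₗ f (Finsupp.single τ b) = b • Finsupp.mapDomain (graft · τ) f := by
  induction f using Finsupp.induction_linear with
  | zero => simp
  | add f g hf hg => simp [hf, hg, Finsupp.mapDomain_add]
  | single σ a => simp [graftₗ_single_left, Finsupp.mapDomain_single, mul_comm]

theorem graftₗ_apply_leaf (f g : PBTree →₀ ℚ) : graftₗ f g leaf = 0 := by
  induction f using Finsupp.induction_linear with
  | zero => simp
  | add f f' hf hf' => simp [hf, hf']
  | single σ a => simp [graftₗ_single_left, Finsupp.mapDomain_of_notMem_range]

theorem graftₗ_apply_graft (f g : PBTree →₀ ℚ) (τ₁ τ₂ : PBTree) :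
    graftₗ f g (graft τ₁ τ₂) = f τ₁ * g τ₂ := by
  induction f using Finsupp.induction_linear with
  | zero => simp
  | add f f' hf hf' => simp [hf, hf', add_mul]
  | single σ a =>
    rw [graftₗ_single_left, Finsupp.smul_apply, Finsupp.single_apply]
    split_ifs with h
    · subst h
      rw [Finsupp.mapDomain_apply fun _ _ h => (graft.inj h).2]
      rfl
    · simp [Finsupp.mapDomain_of_notMem_range, h]

theorem Bv_graft (τ₁ τ₂ : PBTree) :
    Bv (graft τ₁ τ₂) =
      graftₗ (Bv τ₁) (Finsupp.single τ₂ 1) + graftₗ (Finsupp.single τ₁ 1) (Bv τ₂) := by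
  rw [graftₗ_single_left, graftₗ_single_right, one_smul, one_smul]
  rfl

theorem branchingₗ_graftₗ (f g : PBTree →₀ ℚ) :
    branchingₗ (graftₗ f g) = graftₗ (branchingₗ f) g + graftₗ f (branchingₗ g) := by
  suffices graftₗ.compr₂ branchingₗ = graftₗ.comp branchingₗ + graftₗ.compl₂ branchingₗ from
    LinearMap.congr_fun₂ this f g
  ext τ₁ τ₂
  simp [branchingₗ, graftₗ_single_left, Finsupp.mapDomain_single, Bv_graft]

theorem iterate_branchingₗ_succ_leaf (m : ℕ) :
    branchingₗ^[m + 1] (Finsupp.single leaf 1) =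
      ∑ ij ∈ antidiagonal m, m.choose ij.1 • graftₗ (branchingₗ^[ij.1] (Finsupp.single leaf 1))
        (branchingₗ^[ij.2] (Finsupp.single leaf 1)) := by
  have hleaf : branchingₗ (Finsupp.single leaf 1) =
      graftₗ (Finsupp.single leaf 1) (Finsupp.single leaf 1) := by
    simp [branchingₗ, graftₗ_single_left, Finsupp.mapDomain_single, Bv]
  rw [Function.iterate_succ_apply, hleaf,
    Module.End.iterate_apply_of_leibniz graftₗ _ _ _ branchingₗ_graftₗ]

end PBTree

open PBTree in
/-- Branching power formula: `B_∨^n(leaf) = Σ_{|τ|=n} ω(τ)·τ`, stated coefficientwise: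
the coefficient of a tree `τ` in `B_∨^n(leaf)` is `ω(τ)` if `|τ| = n` and `0` otherwise. -/
theorem branching_power_formula (n : ℕ) (τ : PBTree) :
    (BvLin^[n] (Finsupp.single PBTree.leaf 1)) τ
      = if grade τ = n then (weight τ : ℚ) else 0 := by
  rw [← coe_branchingₗ]
  induction τ generalizing n with
  | leaf =>
    cases n with
    | zero => simp [PBTree.grade, weight]
    | succ m =>
      simp [iterate_branchingₗ_succ_leaf, Finsupp.finsetSum_apply, graftₗ_apply_leaf, PBTree.grade]
  | graft τ₁ τ₂ ih₁ ih₂ =>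
    cases n with
    | zero => simp [PBTree.grade]
    | succ m =>
      have hpair (ij : ℕ × ℕ) :
          (τ₂.grade = ij.2 ∧ τ₁.grade = ij.1) ↔ (τ₁.grade, τ₂.grade) = ij := by
        rw [Prod.ext_iff, and_comm]
      rw [iterate_branchingₗ_succ_leaf, Finsupp.finsetSum_apply]
      simp only [Finsupp.smul_apply, graftₗ_apply_graft, ih₁, ih₂, ite_mul, mul_ite, zero_mul,
        mul_zero, ← ite_and, hpair, smul_ite, smul_zero, sum_ite_eq,
        HasAntidiagonal.mem_antidiagonal, PBTree.grade, weight, add_left_inj, nsmul_eq_mul]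
      split_ifs with h
      · subst h; push_cast; ring
      · rfl
end

section
/- The formal power series g(t) = Σ_{n≥0} (t^n/n!) g_n, with g_n = Σ_{|τ|=n} ω(τ)·τ, satisfies the Smoluchowski tree equation ∂_t g = graft(g, g) with initial condition g(0) = leaf, as an identity of formal power series with coefficients in the free vector space on rooted planar binary trees. -/
namespace PBTree

/-- The bilinear extension of grafting, on coefficient functions. -/
def graftExt (f g : PBTree → ℚ) : PBTree → ℚ
  | leaf => 0
  | graft t1 t2 => f t1 * g t2

/-- `g_n = Σ_{|τ|=n} ω(τ)·τ`, as a coefficient function. -/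
def gvec (n : ℕ) : PBTree → ℚ :=
  fun τ => if grade τ = n then (weight τ : ℚ) else 0

end PBTree

/-! The binomial factor in `ω` makes `ω(graft τ₁ τ₂) / (|τ₁| + |τ₂|)!` equal to
`(ω(τ₁) / |τ₁|!) · (ω(τ₂) / |τ₂|!)`. Hence the coefficient of `graft τ₁ τ₂` in `g_{n+1} / n!` is
exactly the one surviving term `j = |τ₁|`, `k = |τ₂|` of the convolution `Σ_{j+k=n}`. -/

open Nat

namespace PBTree

theorem inv_factorial_mul_weight_graft (t₁ t₂ : PBTree) :
    (((t₁.grade + t₂.grade)! : ℚ))⁻¹ * weight (graft t₁ t₂)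
      = ((t₁.grade)! : ℚ)⁻¹ * weight t₁ * (((t₂.grade)! : ℚ)⁻¹ * weight t₂) := by
  have hfact : ((t₁.grade + t₂.grade).choose (t₁.grade) : ℚ) * (t₁.grade)! * (t₂.grade)!
      = (t₁.grade + t₂.grade)! := by
    rw [Nat.choose_symm_add]
    exact_mod_cast Nat.add_choose_mul_factorial_mul_factorial t₁.grade t₂.grade
  have hchoose : ((t₁.grade + t₂.grade).choose t₁.grade : ℚ) ≠ 0 := by
    exact_mod_cast (Nat.choose_pos (Nat.le_add_right _ _)).ne'
  rw [weight, ← hfact]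
  push_cast
  field_simp

theorem smul_gvec_apply (c : ℚ) (k : ℕ) (t : PBTree) :
    (c • gvec k) t = if t.grade = k then c * weight t else 0 := by
  simp only [Pi.smul_apply, gvec, smul_eq_mul, mul_ite, mul_zero]

theorem grade_eq_zero_iff {t : PBTree} : t.grade = 0 ↔ t = leaf := by
  cases t <;> simp [grade]

theorem gvec_zero : gvec 0 = fun τ => if τ = leaf then (1 : ℚ) else 0 := by
  funext τ
  simp only [gvec, grade_eq_zero_iff]
  split_ifs with h
  · simp [h, weight]
  · rfl

end PBTree

theorem Finset.sum_range_ite_sub_mul_ite {R : Type*} [NonAssocSemiring R] (f g : ℕ → R)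
    (i j n : ℕ) :
    ∑ k ∈ range (n + 1), (if i = n - k then f (n - k) else 0) * (if j = k then g k else 0)
      = if i + j = n then f i * g j else 0 := by
  simp_rw [mul_ite, mul_zero, sum_ite_eq, mem_range]
  by_cases h : i + j = n
  · subst h
    simp
  · rw [if_neg h]
    split_ifs <;> first | omega | simp

open PBTree in
/-- The formal power series `g(t) = Σ_{n≥0} (t^n/n!) g_n` satisfies the Smoluchowski tree
equation `∂_t g = graft(g,g)` with `g(0) = leaf`, i.e. the coefficient identity
`g_{n+1}/n! = Σ_{j+k=n} graft(g_j/j!, g_k/k!)` holds for all `n`, and the constant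
coefficient `g_0` is the single leaf. -/
theorem smoluchowski_tree_equation (n : ℕ) :
    (((Nat.factorial n : ℚ))⁻¹ • gvec (n + 1)
        = ∑ k ∈ Finset.range (n + 1),
            graftExt ((((Nat.factorial (n - k) : ℚ))⁻¹) • gvec (n - k))
              ((((Nat.factorial k : ℚ))⁻¹) • gvec k))
    ∧ gvec 0 = fun τ => if τ = PBTree.leaf then (1 : ℚ) else 0 := by
  constructor
  · funext τ
    cases τ with
    | leaf => simp [gvec, graftExt, PBTree.grade]
    | graft t₁ t₂ =>
      simp only [Finset.sum_apply, graftExt, smul_gvec_apply, PBTree.grade,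
        Nat.add_right_cancel_iff, Finset.sum_range_ite_sub_mul_ite
          (fun m ↦ (m ! : ℚ)⁻¹ * weight t₁) (fun m ↦ (m ! : ℚ)⁻¹ * weight t₂)]
      split_ifs with h
      · subst h
        exact inv_factorial_mul_weight_graft t₁ t₂
      · rfl
  · exact gvec_zero
end

section
/- In the multiplicative kernel case with initial data g₀(x) = e^{−x}/x, the function g(x;t) = e^{−(1+t)x} I₁(2x√t)/(x²√t) satisfies the Smoluchowski coagulation equation with K(x,y) = xy for 0 < t ≤ 1, where I₁ is the modified Bessel function of the first kind of order 1. -/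
open MeasureTheory Real

/-- The modified Bessel function of the first kind of order 1,
`I₁(z) = Σ_{m≥0} (z/2)^{2m+1} / (m! (m+1)!)`. -/
noncomputable def besselI1 (z : ℝ) : ℝ :=
  ∑' m : ℕ, (z / 2) ^ (2 * m + 1) / ((Nat.factorial m : ℝ) * (Nat.factorial (m + 1) : ℝ))

/-- The closed-form multiplicative-kernel solution
`g(x;t) = e^{−(1+t)x} I₁(2x√t)/(x²√t)`. -/
noncomputable def gMul (x t : ℝ) : ℝ :=
  Real.exp (-(1 + t) * x) * besselI1 (2 * x * Real.sqrt t) / (x ^ 2 * Real.sqrt t)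

open Filter Topology Nat Finset

/-!
Write `Φₖ(u) = ∑ uᵐ / (m! (m+k)!)`, so that `I₁(z) = (z/2) Φ₁(z²/4)`, `Φₖ' = Φₖ₊₁` and
`g(x;t) = e^{-(1+t)x} Φ₁(t x²) / x`. Since `1 / (m! (m+1)!) = Cₘ / (2m)!` with `Cₘ` the Catalan
numbers, both integrals in the equation can be computed term by term. In the gain term each
product of monomials gives a beta integral, and the Catalan recursion `Cₖ₊₁ = ∑ Cᵢ Cⱼ` sums the
result to `2x Φ₂(t x²)`. The mass `∫ y g(y;t) dy` becomes `C(t/(1+t)²) / (1+t)`, where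
`C(z) = ∑ Cₙ zⁿ`. The relation `z C² - C + 1 = 0` has the roots `1 + t` and `(1 + t)/t`, and
the bound `C ≤ C(1/4) = 2` selects `1 + t` when `t ≤ 1`, so the mass equals `1`. (For `t > 1`
it is `1/t`: this is gelation.) With these two values, the equation reduces to `Φ₁' = Φ₂`.
-/

theorem Nat.centralBinom_sq_mul_le (n : ℕ) : n.centralBinom ^ 2 * (2 * n + 1) ≤ 16 ^ n := by
  induction n with
  | zero => simp
  | succ n ih =>
    refine Nat.le_of_mul_le_mul_left (c := (n + 1) ^ 2) ?_ (pow_pos n.succ_pos 2)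
    calc (n + 1) ^ 2 * ((n + 1).centralBinom ^ 2 * (2 * (n + 1) + 1))
        = ((n + 1) * (n + 1).centralBinom) ^ 2 * (2 * n + 3) := by ring
      _ = 4 * (2 * n + 1) * (2 * n + 3) * (n.centralBinom ^ 2 * (2 * n + 1)) := by
        rw [Nat.succ_mul_centralBinom_succ]; ring
      _ ≤ 16 * (n + 1) ^ 2 * 16 ^ n := Nat.mul_le_mul (by nlinarith) ih
      _ = (n + 1) ^ 2 * 16 ^ (n + 1) := by ring

theorem catalan_div_four_pow_le (n : ℕ) :
    (catalan n : ℝ) / 4 ^ n ≤ 1 / ((n + 1) * √(n + 1)) := by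
  have hcentral : (n.centralBinom : ℝ) * √(n + 1) ≤ 4 ^ n := by
    refine (pow_le_pow_iff_left₀ (by positivity) (by positivity) two_ne_zero).1 ?_
    have : (n.centralBinom : ℝ) ^ 2 * (2 * n + 1) ≤ 16 ^ n := by
      exact_mod_cast Nat.centralBinom_sq_mul_le n
    rw [mul_pow, Real.sq_sqrt (by positivity), ← pow_mul, mul_comm n 2, pow_mul]
    norm_num
    nlinarith [sq_nonneg (n.centralBinom : ℝ)]
  have hcatalan : ((n : ℝ) + 1) * catalan n = n.centralBinom := by
    exact_mod_cast succ_mul_catalan_eq_centralBinom n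
  rw [← hcatalan] at hcentral
  rw [div_le_div_iff₀ (by positivity) (by positivity)]
  nlinarith [Real.sqrt_nonneg ((n : ℝ) + 1)]

theorem summable_catalan_div_four_pow : Summable fun n : ℕ => (catalan n : ℝ) / 4 ^ n := by
  have h : Summable fun n : ℕ => 1 / ((n : ℝ) + 1) ^ (3 / 2 : ℝ) := by
    simpa using (summable_nat_add_iff 1).2 (Real.summable_one_div_nat_rpow.2 (by norm_num))
  refine Summable.of_nonneg_of_le (fun n => by positivity) (fun n => ?_) h
  convert catalan_div_four_pow_le n using 2
  rw [show (3 / 2 : ℝ) = 1 + 1 / 2 by norm_num, Real.rpow_add (by positivity), Real.rpow_one,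
    Real.sqrt_eq_rpow]

theorem summable_catalan_mul_pow {z : ℝ} (hz : 0 ≤ z) (hz' : z ≤ 1 / 4) :
    Summable fun n : ℕ => (catalan n : ℝ) * z ^ n := by
  refine summable_catalan_div_four_pow.of_nonneg_of_le (fun n => by positivity) (fun n => ?_)
  rw [div_eq_mul_inv, ← inv_pow]
  gcongr
  rwa [← one_div]

theorem catalan_mul_factorial_mul_factorial_succ (m : ℕ) :
    catalan m * (m ! * (m + 1)!) = (2 * m)! := by
  have h := Nat.choose_mul_factorial_mul_factorial (show m ≤ 2 * m by omega)
  rw [show 2 * m - m = m by omega, ← Nat.centralBinom_eq_two_mul_choose,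
    ← succ_mul_catalan_eq_centralBinom] at h
  rw [← h, Nat.factorial_succ]
  ring

theorem catalan_succ_mul_factorial_mul_factorial_add_two (k : ℕ) :
    catalan (k + 1) * (k ! * (k + 2)!) = 2 * (2 * k + 1)! := by
  refine Nat.eq_of_mul_eq_mul_left (Nat.succ_pos k) ?_
  rw [Nat.succ_eq_add_one]
  have h := catalan_mul_factorial_mul_factorial_succ (k + 1)
  rw [show 2 * (k + 1) = 2 * k + 1 + 1 by ring, Nat.factorial_succ (2 * k + 1),
    Nat.factorial_succ k, show k + 1 + 1 = k + 2 by ring] at h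
  linear_combination h

noncomputable def catalanSeries (z : ℝ) : ℝ := ∑' n : ℕ, (catalan n : ℝ) * z ^ n

section CatalanSeries

variable {z : ℝ}

theorem catalanSeries_sq (hz : 0 ≤ z) (hz' : z ≤ 1 / 4) :
    catalanSeries z ^ 2 = ∑' n : ℕ, (catalan (n + 1) : ℝ) * z ^ n := by
  have hsum := (summable_catalan_mul_pow hz hz').norm
  rw [catalanSeries, sq, tsum_mul_tsum_eq_tsum_sum_antidiagonal_of_summable_norm hsum hsum]
  refine tsum_congr fun n => ?_
  rw [catalan_succ', Nat.cast_sum, Finset.sum_mul]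
  refine Finset.sum_congr rfl fun ij hij => ?_
  rw [Finset.HasAntidiagonal.mem_antidiagonal] at hij
  rw [← hij, pow_add]
  push_cast
  ring

theorem catalanSeries_quadratic (hz : 0 ≤ z) (hz' : z ≤ 1 / 4) :
    z * catalanSeries z ^ 2 - catalanSeries z + 1 = 0 := by
  have hsum := summable_catalan_mul_pow hz hz'
  rw [catalanSeries_sq hz hz', ← tsum_mul_left, catalanSeries, hsum.tsum_eq_zero_add]
  simp only [catalan_zero, Nat.cast_one, pow_zero, pow_succ]
  ring_nf

theorem catalanSeries_le_two (hz : 0 ≤ z) (hz' : z ≤ 1 / 4) : catalanSeries z ≤ 2 := by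
  have hquarter : catalanSeries (1 / 4) = 2 := by
    have h := catalanSeries_quadratic (z := 1 / 4) (by norm_num) le_rfl
    nlinarith [sq_nonneg (catalanSeries (1 / 4) - 2)]
  rw [← hquarter]
  refine (summable_catalan_mul_pow hz hz').tsum_le_tsum (fun n => ?_)
    (summable_catalan_mul_pow (by norm_num) le_rfl)
  gcongr

end CatalanSeries

theorem div_one_add_sq_le_quarter (t : ℝ) : t / (1 + t) ^ 2 ≤ 1 / 4 := by
  rcases eq_or_ne (1 + t) 0 with h | h
  · simp [h]
  · rw [div_le_div_iff₀ (by positivity) (by norm_num)]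
    nlinarith [sq_nonneg (1 - t)]

theorem catalanSeries_div_one_add_sq {t : ℝ} (ht : 0 ≤ t) (ht' : t ≤ 1) :
    catalanSeries (t / (1 + t) ^ 2) = 1 + t := by
  have hz : 0 ≤ t / (1 + t) ^ 2 := by positivity
  have hz' := div_one_add_sq_le_quarter t
  have hquad := catalanSeries_quadratic hz hz'
  have hle := catalanSeries_le_two hz hz'
  set T := catalanSeries (t / (1 + t) ^ 2)
  have hroots : (T - (1 + t)) * (t * T - (1 + t)) = 0 := by
    field_simp at hquad
    linear_combination hquad
  rcases mul_eq_zero.1 hroots with h | h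
  · linarith
  · have ht1 : t = 1 := by nlinarith
    subst ht1
    linarith

noncomputable def besselSeries (k : ℕ) (u : ℝ) : ℝ := ∑' m : ℕ, u ^ m / (m ! * (m + k)! : ℝ)

theorem summable_besselSeries (k : ℕ) (u : ℝ) :
    Summable fun m : ℕ => u ^ m / (m ! * (m + k)! : ℝ) := by
  refine (Real.summable_pow_div_factorial |u|).of_norm_bounded fun m => ?_
  rw [norm_div, norm_pow, Real.norm_eq_abs, Real.norm_of_nonneg (by positivity)]
  gcongr
  exact le_mul_of_one_le_right (by positivity) (mod_cast (m + k).factorial_pos)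

theorem hasDerivAt_besselSeries (k : ℕ) (u : ℝ) :
    HasDerivAt (besselSeries k) (besselSeries (k + 1) u) u := by
  set R := |u| + 1
  have hu : u ∈ Metric.ball (0 : ℝ) R := by simp [R]
  have hbound : ∀ m : ℕ, ∀ y ∈ Metric.ball (0 : ℝ) R,
      ‖(m * y ^ (m - 1)) / (m ! * (m + k)! : ℝ)‖ ≤ m * R ^ (m - 1) / (m ! * (m + k)! : ℝ) := by
    intro m y hy
    rw [mem_ball_zero_iff] at hy
    rw [norm_div, norm_mul, norm_pow, Real.norm_natCast, Real.norm_eq_abs (_ * _),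
      abs_of_pos (by positivity)]
    gcongr
  have hshift : ∀ (v : ℝ) (m : ℕ),
      ((m + 1 : ℕ) : ℝ) * v ^ (m + 1 - 1) / ((m + 1)! * (m + 1 + k)! : ℝ)
        = v ^ m / (m ! * (m + (k + 1))! : ℝ) := by
    intro v m
    rw [Nat.add_sub_cancel, Nat.factorial_succ, show m + 1 + k = m + (k + 1) by ring]
    push_cast
    field_simp
  have hsummable : Summable fun m : ℕ => m * R ^ (m - 1) / (m ! * (m + k)! : ℝ) :=
    (summable_nat_add_iff 1).1 <| (summable_besselSeries (k + 1) R).congr fun m => (hshift R m).symm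
  have hderiv := hasDerivAt_tsum_of_isPreconnected hsummable Metric.isOpen_ball
    (convex_ball (0 : ℝ) R).isPreconnected (fun m y _ => (hasDerivAt_pow m y).div_const _)
    hbound hu (summable_besselSeries k u) hu
  rwa [(hsummable.of_norm_bounded (hbound · u hu)).tsum_eq_zero_add, Nat.cast_zero, zero_mul,
    zero_div, zero_add, tsum_congr (hshift u)] at hderiv

theorem besselSeries_one_term (s y : ℝ) (m : ℕ) :
    (s * y ^ 2) ^ m / (m ! * (m + 1)! : ℝ) = catalan m * s ^ m * (y ^ (2 * m) / (2 * m)!) := by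
  have hcatalan : (catalan m : ℝ) ≠ 0 := by
    have := catalan_mul_factorial_mul_factorial_succ m
    exact_mod_cast left_ne_zero_of_mul (this ▸ Nat.factorial_ne_zero _)
  rw [← catalan_mul_factorial_mul_factorial_succ, mul_pow, pow_mul]
  push_cast
  field_simp

theorem integral_tsum_of_nonneg {α ι : Type*} [MeasurableSpace α] [Countable ι] {μ : Measure α}
    {f : ι → α → ℝ} (hf : ∀ i, Integrable (f i) μ) (hf₀ : ∀ i a, 0 ≤ f i a)
    (hsum : Summable fun i => ∫ a, f i a ∂μ) :
    ∫ a, ∑' i, f i a ∂μ = ∑' i, ∫ a, f i a ∂μ := by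
  refine (integral_tsum_of_summable_integral_norm hf ?_).symm
  simpa only [Real.norm_of_nonneg (hf₀ _ _)] using hsum

theorem integral_sub_pow_mul_pow_div_factorial (x : ℝ) (p q : ℕ) :
    ∫ y in (0 : ℝ)..x, (x - y) ^ p / p ! * (y ^ q / q !) = x ^ (p + q + 1) / (p + q + 1)! := by
  induction p generalizing q with
  | zero =>
    simp only [pow_zero, Nat.factorial_zero, Nat.cast_one, div_one, one_mul, zero_add,
      intervalIntegral.integral_div, integral_pow, Nat.factorial_succ]
    push_cast
    field_simp
    ring
  | succ p ih =>
    have hu : ∀ y ∈ Set.uIcc 0 x, HasDerivAt (fun y => (x - y) ^ (p + 1) / (p + 1)! : ℝ → ℝ)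
        (-((x - y) ^ p / p !)) y := by
      intro y _
      refine ((((hasDerivAt_id y).const_sub x).pow (p + 1)).div_const _).congr_deriv ?_
      rw [Nat.factorial_succ]
      push_cast
      field_simp
      simp
    have hv : ∀ y ∈ Set.uIcc 0 x, HasDerivAt (fun y => y ^ (q + 1) / (q + 1)! : ℝ → ℝ)
        (y ^ q / q !) y := by
      intro y _
      refine ((hasDerivAt_pow (q + 1) y).div_const _).congr_deriv ?_
      rw [Nat.factorial_succ]
      push_cast
      field_simp
    rw [intervalIntegral.integral_mul_deriv_eq_deriv_mul hu hv
      (Continuous.intervalIntegrable (by fun_prop) _ _)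
      (Continuous.intervalIntegrable (by fun_prop) _ _)]
    simp only [neg_mul, intervalIntegral.integral_neg, ih, sub_self]
    rw [show p + (q + 1) + 1 = p + 1 + q + 1 by ring]
    simp

theorem integral_besselSeries_cauchy_term (s x : ℝ) (k : ℕ) :
    ∫ y in (0 : ℝ)..x, ∑ ij ∈ antidiagonal k,
        (s * (x - y) ^ 2) ^ ij.1 / (ij.1 ! * (ij.1 + 1)! : ℝ)
          * ((s * y ^ 2) ^ ij.2 / (ij.2 ! * (ij.2 + 1)! : ℝ))
      = 2 * x * ((s * x ^ 2) ^ k / (k ! * (k + 2)! : ℝ)) := by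
  have hterm : ∀ ij ∈ antidiagonal k, ∫ y in (0 : ℝ)..x,
      (s * (x - y) ^ 2) ^ ij.1 / (ij.1 ! * (ij.1 + 1)! : ℝ)
        * ((s * y ^ 2) ^ ij.2 / (ij.2 ! * (ij.2 + 1)! : ℝ))
      = catalan ij.1 * catalan ij.2 * (s ^ k * (x ^ (2 * k + 1) / (2 * k + 1)!)) := by
    rintro ⟨i, j⟩ hij
    rw [HasAntidiagonal.mem_antidiagonal] at hij
    simp only [besselSeries_one_term]
    rw [← hij, show 2 * (i + j) + 1 = 2 * i + 2 * j + 1 by ring,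
      ← integral_sub_pow_mul_pow_div_factorial, ← intervalIntegral.integral_const_mul,
      ← intervalIntegral.integral_const_mul]
    congr 1 with y
    rw [pow_add]
    ring
  have hconvolution : ∑ ij ∈ antidiagonal k, (catalan ij.1 : ℝ) * catalan ij.2
      = catalan (k + 1) := by
    rw [catalan_succ']
    push_cast
    rfl
  have hfactorial : (catalan (k + 1) : ℝ) * (k ! * (k + 2)!) = 2 * (2 * k + 1)! := by
    exact_mod_cast catalan_succ_mul_factorial_mul_factorial_add_two k
  rw [intervalIntegral.integral_finsetSum fun ij _ =>
      (Continuous.intervalIntegrable (by fun_prop) _ _), sum_congr rfl hterm, ← sum_mul,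
    hconvolution]
  field_simp
  rw [mul_pow, pow_succ, pow_mul]
  linear_combination (s ^ k * (x ^ 2) ^ k * x) * hfactorial

theorem integral_besselSeries_mul_besselSeries {s x : ℝ} (hs : 0 ≤ s) (hx : 0 ≤ x) :
    ∫ y in (0 : ℝ)..x, besselSeries 1 (s * (x - y) ^ 2) * besselSeries 1 (s * y ^ 2)
      = 2 * x * besselSeries 2 (s * x ^ 2) := by
  set H : ℕ → ℝ → ℝ := fun k y => ∑ ij ∈ antidiagonal k,
    (s * (x - y) ^ 2) ^ ij.1 / (ij.1 ! * (ij.1 + 1)! : ℝ)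
      * ((s * y ^ 2) ^ ij.2 / (ij.2 ! * (ij.2 + 1)! : ℝ))
  have hcauchy : ∀ y, besselSeries 1 (s * (x - y) ^ 2) * besselSeries 1 (s * y ^ 2)
      = ∑' k, H k y := fun y =>
    tsum_mul_tsum_eq_tsum_sum_antidiagonal_of_summable_norm
      (summable_besselSeries 1 _).norm (summable_besselSeries 1 _).norm
  have hH₀ : ∀ k y, 0 ≤ H k y := fun k y => by positivity
  have hHcont : ∀ k, Continuous (H k) := fun k => by fun_prop
  have hHint := integral_besselSeries_cauchy_term s x
  simp_rw [hcauchy, intervalIntegral.integral_of_le hx] at hHint ⊢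
  have hsum : Summable fun k => ∫ y in Set.Ioc 0 x, H k y := by
    rw [funext hHint]
    exact (summable_besselSeries 2 _).mul_left _
  rw [integral_tsum_of_nonneg (fun k => (hHcont k).integrableOn_Ioc) hH₀ hsum, tsum_congr hHint,
    tsum_mul_left, besselSeries]

theorem integral_pow_mul_exp_neg_mul_Ioi (n : ℕ) {r : ℝ} (hr : 0 < r) :
    ∫ y in Set.Ioi 0, y ^ n * exp (-(r * y)) = n ! / r ^ (n + 1) := by
  have h := Real.integral_rpow_mul_exp_neg_mul_Ioi (a := n + 1) (by positivity) hr
  rw [add_sub_cancel_right, Real.Gamma_nat_eq_factorial, ← Nat.cast_succ, Real.rpow_natCast,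
    div_pow, one_pow] at h
  simp_rw [Real.rpow_natCast] at h
  rw [h, Nat.succ_eq_add_one]
  ring

theorem integrableOn_pow_mul_exp_neg_mul_Ioi (n : ℕ) {r : ℝ} (hr : 0 < r) :
    IntegrableOn (fun y => y ^ n * exp (-(r * y))) (Set.Ioi 0) :=
  Integrable.of_integral_ne_zero (by rw [integral_pow_mul_exp_neg_mul_Ioi n hr]; positivity)

theorem integral_exp_mul_besselSeries {r s : ℝ} (hr : 0 < r) (hs : 0 ≤ s)
    (hsr : s / r ^ 2 ≤ 1 / 4) :
    ∫ y in Set.Ioi 0, exp (-(r * y)) * besselSeries 1 (s * y ^ 2)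
      = catalanSeries (s / r ^ 2) / r := by
  set f : ℕ → ℝ → ℝ := fun m y => catalan m * s ^ m / (2 * m)! * (y ^ (2 * m) * exp (-(r * y)))
  have hf : ∀ m, ∫ y in Set.Ioi 0, f m y = catalan m * (s / r ^ 2) ^ m / r := by
    intro m
    rw [integral_const_mul, integral_pow_mul_exp_neg_mul_Ioi _ hr, div_pow, ← pow_mul]
    field_simp
    ring
  have hexpand : ∀ y, exp (-(r * y)) * besselSeries 1 (s * y ^ 2) = ∑' m, f m y := by
    intro y
    rw [besselSeries, ← tsum_mul_left]
    refine tsum_congr fun m => ?_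
    rw [besselSeries_one_term]
    ring
  simp_rw [hexpand]
  rw [integral_tsum_of_nonneg, tsum_congr hf, catalanSeries, ← tsum_div_const]
  · exact fun m => (integrableOn_pow_mul_exp_neg_mul_Ioi _ hr).const_mul _
  · intro m y
    simp only [f, pow_mul]
    positivity
  · simp_rw [hf]
    exact (summable_catalan_mul_pow (by positivity) hsr).div_const r

theorem besselSeries_zero (k : ℕ) : besselSeries k 0 = 1 / k ! := by
  rw [besselSeries, tsum_eq_single 0 fun m hm => by simp [hm]]
  simp

theorem continuous_besselSeries (k : ℕ) : Continuous (besselSeries k) :=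
  continuous_iff_continuousAt.2 fun u => (hasDerivAt_besselSeries k u).continuousAt

theorem besselI1_eq (z : ℝ) : besselI1 z = z / 2 * besselSeries 1 ((z / 2) ^ 2) := by
  rw [besselI1, besselSeries, ← tsum_mul_left]
  refine tsum_congr fun m => ?_
  rw [pow_succ, pow_mul]
  ring

theorem gMul_eq {x t : ℝ} (hx : x ≠ 0) (ht : 0 < t) :
    gMul x t = exp (-(1 + t) * x) * besselSeries 1 (t * x ^ 2) / x := by
  have hsqrt : 0 < √t := Real.sqrt_pos.2 ht
  rw [gMul, besselI1_eq, show 2 * x * √t / 2 = x * √t by ring, mul_pow, Real.sq_sqrt ht.le]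
  field_simp

theorem hasDerivAt_gMul {x t : ℝ} (hx : x ≠ 0) (ht : 0 < t) :
    HasDerivAt (fun τ => gMul x τ)
      (exp (-(1 + t) * x) * (x * besselSeries 2 (t * x ^ 2) - besselSeries 1 (t * x ^ 2))) t := by
  have hexp : HasDerivAt (fun τ => exp (-(1 + τ) * x)) (exp (-(1 + t) * x) * -x) t := by
    refine HasDerivAt.exp ?_
    simpa using (((hasDerivAt_id t).const_add 1).neg.mul_const x)
  have hbessel : HasDerivAt (fun τ => besselSeries 1 (τ * x ^ 2))
      (besselSeries 2 (t * x ^ 2) * x ^ 2) t :=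
    (hasDerivAt_besselSeries 1 _).comp t (hasDerivAt_mul_const _)
  refine ((hexp.mul hbessel).div_const x).congr_of_eventuallyEq ?_ |>.congr_deriv ?_
  · filter_upwards [Ioi_mem_nhds ht] with τ hτ using gMul_eq hx hτ
  · field_simp
    ring

theorem integral_gain_gMul {x t : ℝ} (hx : 0 ≤ x) (ht : 0 < t) :
    ∫ y in (0 : ℝ)..x, (x - y) * y * gMul (x - y) t * gMul y t
      = 2 * x * exp (-(1 + t) * x) * besselSeries 2 (t * x ^ 2) := by
  have hsplit : ∀ y ∈ Set.Ioo 0 x, (x - y) * y * gMul (x - y) t * gMul y t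
      = exp (-(1 + t) * x) * (besselSeries 1 (t * (x - y) ^ 2) * besselSeries 1 (t * y ^ 2)) := by
    rintro y ⟨hy, hyx⟩
    rw [gMul_eq (sub_pos.2 hyx).ne' ht, gMul_eq hy.ne' ht]
    have hexp : exp (-(1 + t) * x) = exp (-(1 + t) * (x - y)) * exp (-(1 + t) * y) := by
      rw [← exp_add]; ring_nf
    rw [hexp]
    field_simp [(sub_pos.2 hyx).ne', hy.ne']
  rw [intervalIntegral.integral_of_le hx, integral_Ioc_eq_integral_Ioo,
    setIntegral_congr_fun measurableSet_Ioo hsplit, ← integral_Ioc_eq_integral_Ioo,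
    ← intervalIntegral.integral_of_le hx, intervalIntegral.integral_const_mul,
    integral_besselSeries_mul_besselSeries ht.le hx]
  ring

theorem integral_mul_gMul {t : ℝ} (ht : 0 < t) (ht' : t ≤ 1) :
    ∫ y in Set.Ioi 0, y * gMul y t = 1 := by
  have hsimplify : ∀ y ∈ Set.Ioi (0 : ℝ),
      y * gMul y t = exp (-((1 + t) * y)) * besselSeries 1 (t * y ^ 2) := by
    intro y (hy : 0 < y)
    rw [gMul_eq hy.ne' ht, neg_mul]
    field_simp
  have h1t : 0 < 1 + t := by linarith
  rw [setIntegral_congr_fun measurableSet_Ioi hsimplify,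
    integral_exp_mul_besselSeries h1t ht.le (div_one_add_sq_le_quarter t),
    catalanSeries_div_one_add_sq ht.le ht', div_self h1t.ne']

theorem tendsto_gMul_nhdsGT_zero {x : ℝ} (hx : x ≠ 0) :
    Tendsto (fun t => gMul x t) (𝓝[>] 0) (𝓝 (exp (-x) / x)) := by
  have hcont : Continuous fun t => exp (-(1 + t) * x) * besselSeries 1 (t * x ^ 2) / x := by
    have := continuous_besselSeries 1
    fun_prop
  have hvalue : exp (-(1 + 0) * x) * besselSeries 1 (0 * x ^ 2) / x = exp (-x) / x := by
    simp [besselSeries_zero]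
  refine (hvalue ▸ (hcont.tendsto 0).mono_left nhdsWithin_le_nhds).congr' ?_
  filter_upwards [self_mem_nhdsWithin] with t ht using (gMul_eq hx ht).symm

/-- In the multiplicative kernel case `K(x,y) = xy` with initial data `g₀(x) = e^{−x}/x`,
the function `g(x;t) = e^{−(1+t)x} I₁(2x√t)/(x²√t)` satisfies the Smoluchowski
coagulation equation
`∂_t g(x;t) = (1/2)∫₀ˣ (x−y)y g(x−y;t)g(y;t) dy − g(x;t)∫₀^∞ xy g(y;t) dy`
for `0 < t ≤ 1`, and attains the initial data `e^{−x}/x` as `t → 0⁺`. -/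
theorem multiplicative_kernel_bessel_solution :
    (∀ x : ℝ, 0 < x → ∀ t : ℝ, 0 < t → t ≤ 1 →
      HasDerivAt (fun τ => gMul x τ)
        ((1 / 2) * (∫ y in (0:ℝ)..x, (x - y) * y * gMul (x - y) t * gMul y t)
          - gMul x t * ∫ y in Set.Ioi (0 : ℝ), x * y * gMul y t) t)
    ∧ ∀ x : ℝ, 0 < x →
        Filter.Tendsto (fun t => gMul x t) (nhdsWithin 0 (Set.Ioi 0))
          (nhds (Real.exp (-x) / x)) := by
  refine ⟨fun x hx t ht ht' => ?_, fun x hx => tendsto_gMul_nhdsGT_zero hx.ne'⟩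
  have hmass : ∫ y in Set.Ioi 0, x * y * gMul y t = x := by
    simp_rw [mul_assoc]
    rw [integral_const_mul, integral_mul_gMul ht ht', mul_one]
  rw [integral_gain_gMul hx.le ht, hmass, gMul_eq hx.ne' ht]
  convert hasDerivAt_gMul hx.ne' ht using 1
  field_simp
end
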